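/- If a charge spectrum x allows the top Yukawa, then there exists a charge spectrum w with w ⊆ x, w.qHd = none, w.qHu = x.qHu, w.Q5 = ∅, w.Q10 ⊆ x.Q10, w.Q10.card ≤ 2, such that w minimally allows the top Yukawa. -/
import Mathlib


/-- A charge spectrum for the `SU(5)` model: optional Higgs charges and
finite sets of distinct matter charges. -/
structure ChargeSpectrum where
  qHd : Option ℤ
  qHu : Option ℤ
  Q5 : Finset ℤ
  Q10 : Finset ℤ
deriving DecidableEq

namespace ChargeSpectrum

instance : HasSubset ChargeSpectrum where
  Subset x y :=
    x.qHd.toFinset ⊆ y.qHd.toFinset ∧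
    x.qHu.toFinset ⊆ y.qHu.toFinset ∧
    x.Q5 ⊆ y.Q5 ∧ x.Q10 ⊆ y.Q10

/-- `x` allows the top Yukawa coupling `10 10 5_Hu`. -/
def AllowsTopYukawa (x : ChargeSpectrum) : Prop :=
  ∃ q : ℤ, x.qHu = some q ∧ ∃ q1 ∈ x.Q10, ∃ q2 ∈ x.Q10, q1 + q2 = q

/-- `x` is complete: both Higgs sectors present, both matter sectors nonempty. -/
def IsComplete (x : ChargeSpectrum) : Prop :=
  x.qHd.isSome ∧ x.qHu.isSome ∧ x.Q5 ≠ ∅ ∧ x.Q10 ≠ ∅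

/-- `x` allows at least one of the dangerous operators μ, β, Λ, W1, W2, W4, K1, K2. -/
def IsPhenoConstrained (x : ChargeSpectrum) : Prop :=
  (∃ a : ℤ, x.qHd = some a ∧ x.qHu = some a) ∨
  (∃ b : ℤ, x.qHu = some b ∧ b ∈ x.Q5) ∨
  (∃ q5 ∈ x.Q5, ∃ q5' ∈ x.Q5, ∃ q10 ∈ x.Q10, q5 + q5' + q10 = 0) ∨
  (∃ q10 ∈ x.Q10, ∃ q10' ∈ x.Q10, ∃ q10'' ∈ x.Q10, ∃ q5 ∈ x.Q5,
    q10 + q10' + q10'' + q5 = 0) ∨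
  (∃ a : ℤ, x.qHd = some a ∧ ∃ q10 ∈ x.Q10, ∃ q10' ∈ x.Q10, ∃ q10'' ∈ x.Q10,
    q10 + q10' + q10'' + a = 0) ∨
  (∃ a : ℤ, x.qHd = some a ∧ ∃ b : ℤ, x.qHu = some b ∧ ∃ q5 ∈ x.Q5,
    q5 + a - 2 * b = 0) ∨
  (∃ q10 ∈ x.Q10, ∃ q10' ∈ x.Q10, ∃ q5 ∈ x.Q5, q10 + q10' - q5 = 0) ∨
  (∃ a : ℤ, x.qHd = some a ∧ ∃ b : ℤ, x.qHu = some b ∧ ∃ q10 ∈ x.Q10,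
    a + b + q10 = 0)

/-- `w` minimally allows the top Yukawa: it allows it, but no proper
sub-spectrum does. -/
def MinimallyAllowsTopYukawa (w : ChargeSpectrum) : Prop :=
  AllowsTopYukawa w ∧ ∀ y : ChargeSpectrum, y ⊆ w → y ≠ w → ¬ AllowsTopYukawa y

/-- The bounded class of charge spectra built from the finite charge menus
`S5` and `S10`. -/
def ofFinset (S5 S10 : Finset ℤ) : Finset ChargeSpectrum :=
  ((({none} ∪ S5.image Option.some) ×ˢ ({none} ∪ S5.image Option.some)) ×ˢ
      (S5.powerset ×ˢ S10.powerset)).image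
    fun p => ⟨p.1.1, p.1.2, p.2.1, p.2.2⟩

/-- Insert a charge into the `Q5` sector. -/
def insertQ5 (x : ChargeSpectrum) (q : ℤ) : ChargeSpectrum :=
  ⟨x.qHd, x.qHu, insert q x.Q5, x.Q10⟩

/-- Insert a charge into the `Q10` sector. -/
def insertQ10 (x : ChargeSpectrum) (q : ℤ) : ChargeSpectrum :=
  ⟨x.qHd, x.qHu, x.Q5, insert q x.Q10⟩

/-- `MemV S5 S10 x` says that `x` lies in the least class `V(S5, S10)` generated
from seeds (completions of minimal top-Yukawa witnesses that are not
pheno-constrained) by the `Q5`- and `Q10`-closure moves. -/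
inductive MemV (S5 S10 : Finset ℤ) : ChargeSpectrum → Prop
  | seed (w : ChargeSpectrum) (hw : w ∈ ofFinset S5 S10)
      (hmin : MinimallyAllowsTopYukawa w) (a b : ℤ) (ha : a ∈ S5) (hb : b ∈ S5)
      (hc : ¬ IsPhenoConstrained ⟨some a, w.qHu, {b}, w.Q10⟩) :
      MemV S5 S10 ⟨some a, w.qHu, {b}, w.Q10⟩
  | q5Closure (x : ChargeSpectrum) (hx : MemV S5 S10 x) (q : ℤ) (hq : q ∈ S5)
      (h : ¬ IsPhenoConstrained (insertQ5 x q)) : MemV S5 S10 (insertQ5 x q)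
  | q10Closure (x : ChargeSpectrum) (hx : MemV S5 S10 x) (q : ℤ) (hq : q ∈ S10)
      (h : ¬ IsPhenoConstrained (insertQ10 x q)) : MemV S5 S10 (insertQ10 x q)

end ChargeSpectrum

open ChargeSpectrum in
/-- any spectrum allowing the top Yukawa contains a minimal top-Yukawa
witness of the indicated shape. -/
theorem exists_minimal_witness (x : ChargeSpectrum) (hx : AllowsTopYukawa x) :
    ∃ w : ChargeSpectrum, w ⊆ x ∧ w.qHd = none ∧ w.qHu = x.qHu ∧ w.Q5 = ∅ ∧
      w.Q10 ⊆ x.Q10 ∧ w.Q10.card ≤ 2 ∧ MinimallyAllowsTopYukawa w := by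
  obtain ⟨q, hqu, q1, h1, q2, h2, hsum⟩ := hx
  refine ⟨⟨none, some q, ∅, {q1, q2}⟩, ?_, rfl, hqu.symm, rfl, ?_, ?_, ?_, ?_⟩
  · refine ⟨by simp, ?_, by simp, ?_⟩
    · simp [hqu]
    · intro a ha
      simp only [Finset.mem_insert, Finset.mem_singleton] at ha
      rcases ha with h | h <;> simp [h, h1, h2]
  · intro a ha
    simp only [Finset.mem_insert, Finset.mem_singleton] at ha
    rcases ha with h | h <;> simp [h, h1, h2]
  · exact Finset.card_insert_le _ _ |>.trans (by simp)
  · exact ⟨q, rfl, q1, by simp, q2, by simp, hsum⟩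
  · intro y hy hne hay
    obtain ⟨q', hq', a, ha, b, hb, hab⟩ := hay
    obtain ⟨hsd, hsu, hs5, hs10⟩ := hy
    -- y.qHd = none
    have hd : y.qHd = none := by
      cases hyd : y.qHd with
      | none => rfl
      | some d =>
        exfalso
        have := hsd (by simp [hyd] : d ∈ y.qHd.toFinset)
        simp at this
    -- y.Q5 = ∅
    have h5 : y.Q5 = ∅ := Finset.subset_empty.mp hs5
    -- q' = q
    have hqq : q' = q := by
      have := hsu (by simp [hq'] : q' ∈ y.qHu.toFinset)
      simpa using this
    have hu : y.qHu = some q := hqq ▸ hq'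
    -- a, b ∈ {q1, q2}
    have ha' : a = q1 ∨ a = q2 := by
      have := hs10 ha; simpa using this
    have hb' : b = q1 ∨ b = q2 := by
      have := hs10 hb; simpa using this
    have hsum' : a + b = q1 + q2 := by rw [hab, hqq, ← hsum]
    -- show q1, q2 ∈ y.Q10
    have hmem : q1 ∈ y.Q10 ∧ q2 ∈ y.Q10 := by
      rcases ha' with h | h
      · have : b = q2 := by omega
        exact ⟨h ▸ ha, this ▸ hb⟩
      · have : b = q1 := by omega
        exact ⟨this ▸ hb, h ▸ ha⟩
    have h10 : y.Q10 = {q1, q2} := by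
      apply Finset.Subset.antisymm hs10
      intro c hc
      simp only [Finset.mem_insert, Finset.mem_singleton] at hc
      rcases hc with h | h
      · exact h ▸ hmem.1
      · exact h ▸ hmem.2
    apply hne
    cases y
    simp_all
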